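/- arXiv:1609.05731 — 4 statements merged into one kernel-verified Lean document; each statement's English description precedes it below -/
import Mathlib

section
/- Let (φ, b) solve φ' = (b² - 1)/(2h²), b' = 2bφ on a maximal interval containing t₀ > 0, with φ(t₀) = 0 and b(t₀) = b₀ ∈ (0,1), where h : (0,∞) → (0,∞) is smooth and positive. Then b(t) ∈ (0,1) for all t in the domain of the solution. -/
open Real Filter Set Topology

lemma forward_half (φ b g : ℝ → ℝ) (J : Set ℝ) (t₀ : ℝ)
    (hJint : OrdConnected J) (ht₀ : t₀ ∈ J)
    (hODE : ∀ t ∈ J, HasDerivAt φ (g t) t ∧ HasDerivAt b (2 * b t * φ t) t)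
    (hg : ∀ t ∈ J, b t ^ 2 ≤ 1 → g t ≤ 0)
    (hφ0 : φ t₀ = 0) (hb0 : b t₀ ∈ Ioo (0:ℝ) 1) :
    ∀ t ∈ J, t₀ ≤ t → b t ∈ Ioo (0:ℝ) 1 := by
  by_contra hcon
  push_neg at hcon
  obtain ⟨s, hsJ, hts, hbs⟩ := hcon
  have hIccJ : Icc t₀ s ⊆ J := hJint.out ht₀ hsJ
  set S : Set ℝ := Icc t₀ s ∩ b ⁻¹' (Ioo (0:ℝ) 1)ᶜ with hSdef
  have hSne : S.Nonempty := ⟨s, ⟨hts, le_refl s⟩, hbs⟩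
  have hbcont : ContinuousOn b (Icc t₀ s) := fun t ht =>
    ((hODE t (hIccJ ht)).2.continuousAt).continuousWithinAt
  have hSclosed : IsClosed S :=
    hbcont.preimage_isClosed_of_isClosed isClosed_Icc (isOpen_Ioo.isClosed_compl)
  have hSbdd : BddBelow S := ⟨t₀, fun x hx => hx.1.1⟩
  set t₁ := sInf S with ht₁def
  have ht₁S : t₁ ∈ S := hSclosed.csInf_mem hSne hSbdd
  have ht₁J : t₁ ∈ J := hIccJ ht₁S.1
  have ht₀t₁ : t₀ < t₁ := by
    rcases lt_or_eq_of_le ht₁S.1.1 with h | h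
    · exact h
    · exact absurd hb0 (by rw [h]; exact ht₁S.2)
  have hIccJ1 : Icc t₀ t₁ ⊆ J := hJint.out ht₀ ht₁J
  have hIco : ∀ t ∈ Ico t₀ t₁, b t ∈ Ioo (0:ℝ) 1 := by
    intro t ht
    by_contra hbt
    have : t₁ ≤ t := csInf_le hSbdd ⟨⟨ht.1, ht.2.le.trans ht₁S.1.2⟩, hbt⟩
    exact absurd ht.2 (not_lt.mpr this)
  -- b t₁ ∈ Icc 0 1
  have htend : Tendsto b (𝓝[<] t₁) (𝓝 (b t₁)) :=
    ((hODE t₁ ht₁J).2.continuousAt).tendsto.mono_left nhdsWithin_le_nhds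
  have hmemIoo : Ioo t₀ t₁ ∈ 𝓝[<] t₁ := Ioo_mem_nhdsLT_of_mem ⟨ht₀t₁, le_refl _⟩
  have hb1Icc : b t₁ ∈ Icc (0:ℝ) 1 := by
    refine isClosed_Icc.mem_of_tendsto htend ?_
    filter_upwards [hmemIoo] with x hx
    exact Ioo_subset_Icc_self (hIco x ⟨hx.1.le, hx.2⟩)
  have hble : ∀ t ∈ Icc t₀ t₁, 0 ≤ b t ∧ b t ≤ 1 := by
    intro t ht
    rcases eq_or_lt_of_le ht.2 with h | h
    · rw [h]; exact ⟨hb1Icc.1, hb1Icc.2⟩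
    · have := hIco t ⟨ht.1, h⟩; exact ⟨this.1.le, this.2.le⟩
  have hφcont : ContinuousOn φ (Icc t₀ t₁) := fun t ht =>
    ((hODE t (hIccJ1 ht)).1.continuousAt).continuousWithinAt
  have hφmono : AntitoneOn φ (Icc t₀ t₁) := by
    apply antitoneOn_of_deriv_nonpos (convex_Icc _ _) hφcont
    · intro x hx
      rw [interior_Icc] at hx
      exact ((hODE x (hIccJ1 (Ioo_subset_Icc_self hx))).1.differentiableAt).differentiableWithinAt
    · intro x hx
      rw [interior_Icc] at hx
      have hxJ : x ∈ J := hIccJ1 (Ioo_subset_Icc_self hx)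
      rw [(hODE x hxJ).1.deriv]
      have := hble x (Ioo_subset_Icc_self hx)
      exact hg x hxJ (by nlinarith [this.1, this.2])
  have hφle : ∀ t ∈ Icc t₀ t₁, φ t ≤ 0 := by
    intro t ht
    have := hφmono (left_mem_Icc.mpr ht₀t₁.le) ht ht.1
    rw [hφ0] at this; exact this
  have hbcont1 : ContinuousOn b (Icc t₀ t₁) := fun t ht =>
    ((hODE t (hIccJ1 ht)).2.continuousAt).continuousWithinAt
  have hbmono : AntitoneOn b (Icc t₀ t₁) := by
    apply antitoneOn_of_deriv_nonpos (convex_Icc _ _) hbcont1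
    · intro x hx
      rw [interior_Icc] at hx
      exact ((hODE x (hIccJ1 (Ioo_subset_Icc_self hx))).2.differentiableAt).differentiableWithinAt
    · intro x hx
      rw [interior_Icc] at hx
      have hxIcc := Ioo_subset_Icc_self hx
      rw [(hODE x (hIccJ1 hxIcc)).2.deriv]
      have h1 := (hble x hxIcc).1
      have h2 := hφle x hxIcc
      nlinarith
  have hbt₁lt1 : b t₁ < 1 := by
    have := hbmono (left_mem_Icc.mpr ht₀t₁.le) (right_mem_Icc.mpr ht₀t₁.le) ht₀t₁.le
    exact lt_of_le_of_lt this hb0.2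
  have hbt₁0 : b t₁ = 0 := by
    by_contra hne
    exact ht₁S.2 ⟨lt_of_le_of_ne hb1Icc.1 (Ne.symm hne), hbt₁lt1⟩
  -- lower bound via MVT on log ∘ b
  set ε := b t₀ * Real.exp (2 * φ t₁ * (t₁ - t₀)) with hεdef
  have hεpos : 0 < ε := mul_pos hb0.1 (Real.exp_pos _)
  have hφt₁le : φ t₁ ≤ 0 := hφle t₁ (right_mem_Icc.mpr ht₀t₁.le)
  have hεb : ∀ t ∈ Ico t₀ t₁, ε ≤ b t := by
    intro t ht
    rcases eq_or_lt_of_le ht.1 with h | h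
    · rw [← h]
      calc ε ≤ b t₀ * 1 := by
              apply mul_le_mul_of_nonneg_left _ hb0.1.le
              rw [Real.exp_le_one_iff]
              nlinarith
          _ = b t₀ := mul_one _
    · -- MVT on [t₀, t]
      have hsub : Icc t₀ t ⊆ Ico t₀ t₁ := fun x hx => ⟨hx.1, lt_of_le_of_lt hx.2 ht.2⟩
      have hlogcont : ContinuousOn (fun y => Real.log (b y)) (Icc t₀ t) := by
        intro x hx
        have hbx : 0 < b x := (hIco x (hsub hx)).1
        exact ((Real.continuousAt_log hbx.ne').comp
          (hODE x (hIccJ1 ⟨hx.1, (hsub hx).2.le⟩)).2.continuousAt).continuousWithinAt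
      have hderiv : ∀ x ∈ Ioo t₀ t, HasDerivAt (fun y => Real.log (b y)) (2 * φ x) x := by
        intro x hx
        have hxIco : x ∈ Ico t₀ t₁ := hsub ⟨hx.1.le, hx.2.le⟩
        have hbx : 0 < b x := (hIco x hxIco).1
        have := ((hODE x (hIccJ1 ⟨hxIco.1, hxIco.2.le⟩)).2).log hbx.ne'
        convert this using 1
        field_simp
      obtain ⟨c, hc, hceq⟩ := exists_hasDerivAt_eq_slope _ _ h hlogcont hderiv
      have hcIcc : c ∈ Icc t₀ t₁ := ⟨hc.1.le, (hc.2.trans ht.2).le⟩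
      have hφc1 : φ t₁ ≤ φ c := hφmono hcIcc (right_mem_Icc.mpr ht₀t₁.le) hcIcc.2
      have hφc0 : φ c ≤ 0 := hφle c hcIcc
      have hbtpos : 0 < b t := (hIco t ht).1
      have hlogeq : Real.log (b t) = Real.log (b t₀) + 2 * φ c * (t - t₀) := by
        have htne : t - t₀ ≠ 0 := sub_ne_zero.mpr (ne_of_gt h)
        field_simp at hceq
        linarith [hceq]
      have hkey : Real.log (b t₀) + 2 * φ t₁ * (t₁ - t₀) ≤ Real.log (b t) := by
        rw [hlogeq]
        nlinarith [ht.2, h]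
      calc ε = Real.exp (Real.log (b t₀) + 2 * φ t₁ * (t₁ - t₀)) := by
              rw [Real.exp_add, Real.exp_log hb0.1]
          _ ≤ Real.exp (Real.log (b t)) := Real.exp_le_exp.mpr hkey
          _ = b t := Real.exp_log hbtpos
  have : ε ≤ b t₁ := by
    refine ge_of_tendsto htend ?_
    filter_upwards [hmemIoo] with x hx
    exact hεb x ⟨hx.1.le, hx.2⟩
  rw [hbt₁0] at this
  exact absurd this (not_le.mpr hεpos)

/-- For the ODE system `φ' = (b² - 1)/(2h²)`, `b' = 2bφ` on an
interval `J ⊆ (0,∞)` containing `t₀`, with initial conditions `φ(t₀) = 0` and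
`b(t₀) = b₀ ∈ (0,1)`, the solution satisfies `b(t) ∈ (0,1)` throughout `J`. -/
theorem b_stays_in_unit_interval
    (h φ b : ℝ → ℝ) (J : Set ℝ) (t₀ : ℝ)
    (hJ : J ⊆ Ioi 0) (hJint : OrdConnected J) (ht₀ : t₀ ∈ J) (ht₀pos : 0 < t₀)
    (hh : ContDiff ℝ (⊤ : ℕ∞) h) (hhpos : ∀ t ∈ Ioi (0:ℝ), 0 < h t)
    (hODE : ∀ t ∈ J,
      HasDerivAt φ ((b t ^ 2 - 1) / (2 * h t ^ 2)) t ∧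
      HasDerivAt b (2 * b t * φ t) t)
    (hφ0 : φ t₀ = 0) (hb0 : b t₀ ∈ Ioo (0:ℝ) 1) :
    ∀ t ∈ J, b t ∈ Ioo (0:ℝ) 1 := by
  intro t ht
  rcases le_total t₀ t with hle | hle
  · refine forward_half φ b (fun s => (b s ^ 2 - 1) / (2 * h s ^ 2)) J t₀ hJint ht₀ hODE
      ?_ hφ0 hb0 t ht hle
    intro s hs hbs
    have hhs : 0 < h s := hhpos s (hJ hs)
    apply div_nonpos_of_nonpos_of_nonneg (by linarith) (by positivity)
  · -- time reversal
    set J' : Set ℝ := Neg.neg ⁻¹' J with hJ'def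
    have hJ'int : OrdConnected J' := by
      constructor
      intro x hx y hy z hz
      exact hJint.out hy hx ⟨neg_le_neg hz.2, neg_le_neg hz.1⟩
    have ht₀' : -t₀ ∈ J' := by simpa [hJ'def] using ht₀
    have ht' : -t ∈ J' := by simpa [hJ'def] using ht
    have key := forward_half (fun s => -φ (-s)) (fun s => b (-s))
      (fun s => (b (-s) ^ 2 - 1) / (2 * h (-s) ^ 2)) J' (-t₀) hJ'int ht₀'
      ?_ ?_ (by simpa using hφ0) (by simpa using hb0) (-t) ht' (neg_le_neg hle)
    · simpa using key
    · intro s hs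
      have hsJ : -s ∈ J := hs
      obtain ⟨h1, h2⟩ := hODE (-s) hsJ
      constructor
      · have : HasDerivAt (fun s => -φ (-s)) (-((b (-s) ^ 2 - 1) / (2 * h (-s) ^ 2) * -1)) s :=
          (h1.comp s (hasDerivAt_neg s)).neg
        convert this using 1
        ring
      · have : HasDerivAt (fun s => b (-s)) (2 * b (-s) * φ (-s) * -1) s :=
          h2.comp s (hasDerivAt_neg s)
        convert this using 1
        ring
    · intro s hs hbs
      have hhs : 0 < h (-s) := hhpos (-s) (hJ hs)
      apply div_nonpos_of_nonpos_of_nonneg (by linarith) (by positivity)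
end

section
/- Let (φ, b) solve φ' = (b² - 1)/(2h²), b' = 2bφ on (0, t₀] with b(t) ∈ (0,1), φ(t) > 0 on (0, t₀], and h(t)² = t² + O(t³) as t → 0⁺. Then lim_{t → 0⁺} t·φ(t) = 1/2. -/
/-!
Since `|h² - t²| ≤ C t³`, `|1/h² - 1/t²| ≤ 2C/t` near `0`. With `0 < 1 - b² < 1`, the equation
`φ' = -(1 - b²)/(2h²)` gives `φ' ≥ -1/(2t²) - C/t`; integrating down from a fixed point,
`t φ(t) ≤ 1/2 + O(t log t)`. As `b' = 2bφ > 0`, `b` is increasing, so on `(0, s]` also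
`φ' ≤ -(1 - b(s)²)/(2t²) + C/t`, whence `t φ(t) ≥ (1 - b(s)²)/2 - o(1)`. For one fixed `s` this makes
`(log b)' = 2φ ≥ c/t` near `0`, so `b(t) = O(tᶜ) → 0`; letting `s → 0` gives the lower bound `1/2`.
-/

open Real Filter Set Topology

theorem monotoneOn_Ioc_of_hasDerivAt_nonneg {f f' : ℝ → ℝ} {a T : ℝ}
    (hf : ∀ x ∈ Ioc a T, HasDerivAt f (f' x) x) (hf' : ∀ x ∈ Ioo a T, 0 ≤ f' x) :
    MonotoneOn f (Ioc a T) := by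
  refine monotoneOn_of_hasDerivWithinAt_nonneg (f' := f') (convex_Ioc a T)
    (fun x hx => (hf x hx).continuousAt.continuousWithinAt) (fun x hx => ?_) (fun x hx => ?_)
  · rw [interior_Ioc] at hx ⊢
    exact (hf x (Ioo_subset_Ioc_self hx)).hasDerivWithinAt
  · rw [interior_Ioc] at hx
    exact hf' x hx

theorem sub_le_sub_of_hasDerivAt_le {f g f' g' : ℝ → ℝ} {a T : ℝ}
    (hf : ∀ x ∈ Ioc a T, HasDerivAt f (f' x) x) (hg : ∀ x ∈ Ioc a T, HasDerivAt g (g' x) x)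
    (hle : ∀ x ∈ Ioo a T, f' x ≤ g' x) {t : ℝ} (ht : t ∈ Ioc a T) :
    g t - f t ≤ g T - f T :=
  monotoneOn_Ioc_of_hasDerivAt_nonneg (fun x hx => (hg x hx).sub (hf x hx))
    (fun x hx => sub_nonneg.2 (hle x hx)) ht (right_mem_Ioc.2 (ht.1.trans_le ht.2)) ht.2

theorem hasDerivAt_inv_add_log (a c : ℝ) {x : ℝ} (hx : x ≠ 0) :
    HasDerivAt (fun t => a * t⁻¹ + c * log t) (-a * (x ^ 2)⁻¹ + c * x⁻¹) x :=
  (((hasDerivAt_inv hx).const_mul a).add ((hasDerivAt_log hx).const_mul c)).congr_deriv (by ring)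

theorem tendsto_mul_inv_add_log (a c K : ℝ) :
    Tendsto (fun t => t * (a * t⁻¹ + c * log t + K)) (𝓝[>] 0) (𝓝 a) := by
  have hlim : Tendsto (fun t => a + c * (t * log t) + K * t) (𝓝 0) (𝓝 a) := by
    have hmul_log : Tendsto (fun t => t * log t) (𝓝 0) (𝓝 0) := by
      simpa using continuous_mul_log.tendsto 0
    simpa using (tendsto_const_nhds.add (hmul_log.const_mul c)).add (tendsto_id.const_mul K)
  refine (hlim.mono_left nhdsWithin_le_nhds).congr' ?_
  filter_upwards [self_mem_nhdsWithin] with t (ht : 0 < t)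
  field_simp

theorem eventually_mul_lt_of_hasDerivAt_ge {φ φ' : ℝ → ℝ} {T a c : ℝ} (hT : 0 < T)
    (hφ : ∀ t ∈ Ioc 0 T, HasDerivAt φ (φ' t) t)
    (hle : ∀ t ∈ Ioo 0 T, -a * (t ^ 2)⁻¹ + c * t⁻¹ ≤ φ' t) {a' : ℝ} (ha' : a < a') :
    ∀ᶠ t in 𝓝[>] 0, t * φ t < a' := by
  have hmodel := fun t (ht : t ∈ Ioc 0 T) => hasDerivAt_inv_add_log a c ht.1.ne'
  filter_upwards [(tendsto_mul_inv_add_log a c _).eventually_lt_const ha',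
    Ioc_mem_nhdsGT hT] with t hlt ht
  have := sub_le_sub_of_hasDerivAt_le hmodel hφ hle ht
  calc t * φ t ≤ t * (a * t⁻¹ + c * log t + (φ T - (a * T⁻¹ + c * log T))) := by
        gcongr
        · exact ht.1.le
        · linarith
    _ < a' := hlt

theorem eventually_lt_mul_of_hasDerivAt_le {φ φ' : ℝ → ℝ} {T a c : ℝ} (hT : 0 < T)
    (hφ : ∀ t ∈ Ioc 0 T, HasDerivAt φ (φ' t) t)
    (hle : ∀ t ∈ Ioo 0 T, φ' t ≤ -a * (t ^ 2)⁻¹ + c * t⁻¹) {a' : ℝ} (ha' : a' < a) :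
    ∀ᶠ t in 𝓝[>] 0, a' < t * φ t := by
  have hmodel := fun t (ht : t ∈ Ioc 0 T) => hasDerivAt_inv_add_log a c ht.1.ne'
  filter_upwards [(tendsto_mul_inv_add_log a c _).eventually_const_lt ha',
    Ioc_mem_nhdsGT hT] with t hlt ht
  have := sub_le_sub_of_hasDerivAt_le hφ hmodel hle ht
  calc a' < t * (a * t⁻¹ + c * log t - (a * T⁻¹ + c * log T - φ T)) := by
        simpa only [sub_eq_add_neg] using hlt
    _ ≤ t * φ t := by
        gcongr
        · exact ht.1.le
        · linarith

theorem tendsto_zero_of_hasDerivAt_mul_ge {b g : ℝ → ℝ} {T c : ℝ} (hT : 0 < T) (hc : 0 < c)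
    (hpos : ∀ t ∈ Ioc 0 T, 0 < b t) (hb : ∀ t ∈ Ioc 0 T, HasDerivAt b (b t * g t) t)
    (hg : ∀ᶠ t in 𝓝[>] 0, c ≤ t * g t) : Tendsto b (𝓝[>] 0) (𝓝 0) := by
  obtain ⟨u, hu, hsub⟩ := mem_nhdsGT_iff_exists_Ioc_subset.1 (hg.and (Ioc_mem_nhdsGT hT))
  have hlog : ∀ t ∈ Ioc 0 u, HasDerivAt (fun t => log (b t)) (g t) t := fun t ht => by
    have hbt := hpos t (hsub ht).2
    exact ((hasDerivAt_log hbt.ne').comp t (hb t (hsub ht).2)).congr_deriv (by field_simp)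
  have hbound : ∀ t ∈ Ioc 0 u, log (b t) ≤ c * log t + (log (b u) - c * log u) := fun t ht => by
    have := sub_le_sub_of_hasDerivAt_le (fun x hx => (hasDerivAt_log hx.1.ne').const_mul c) hlog
      (fun x hx => by
        rw [← div_eq_mul_inv, div_le_iff₀' hx.1]
        exact (hsub (Ioo_subset_Ioc_self hx)).1) ht
    linarith
  have hlog_bot : Tendsto (fun t => log (b t)) (𝓝[>] 0) atBot := by
    refine tendsto_atBot_mono' _ ?_ (tendsto_atBot_add_const_right _ (log (b u) - c * log u)
      (tendsto_log_nhdsGT_zero.const_mul_atBot hc))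
    filter_upwards [Ioc_mem_nhdsGT hu] with t ht using hbound t ht
  refine (tendsto_exp_atBot.comp hlog_bot).congr' ?_
  filter_upwards [Ioc_mem_nhdsGT hT] with t ht using exp_log (hpos t ht)

theorem inv_mem_Icc_of_abs_sub_le {H t C : ℝ} (ht : 0 < t) (hCt : C * t ≤ 1 / 2)
    (hH : |H - t ^ 2| ≤ C * t ^ 3) :
    H⁻¹ ∈ Icc ((t ^ 2)⁻¹ - 2 * C * t⁻¹) ((t ^ 2)⁻¹ + 2 * C * t⁻¹) := by
  have hHt : t ^ 2 / 2 ≤ H := by nlinarith [(abs_le.1 hH).1]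
  have hH0 : 0 < H := lt_of_lt_of_le (by positivity) hHt
  have key : |H⁻¹ - (t ^ 2)⁻¹| ≤ 2 * C * t⁻¹ := calc
    |H⁻¹ - (t ^ 2)⁻¹| = |H - t ^ 2| / (H * t ^ 2) := by
      rw [inv_sub_inv hH0.ne' (by positivity), abs_div, abs_sub_comm,
        abs_of_pos (by positivity : 0 < H * t ^ 2)]
    _ ≤ C * t ^ 3 / (t ^ 2 / 2 * t ^ 2) := by gcongr; nlinarith [abs_nonneg (H - t ^ 2)]
    _ = 2 * C * t⁻¹ := by field_simp
  constructor <;> linarith [(abs_le.1 key).1, (abs_le.1 key).2]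

theorem exists_inv_mem_Icc_of_abs_sub_le {H : ℝ → ℝ} {t₀ C : ℝ} (ht₀ : 0 < t₀) (hC : 0 < C)
    (hH : ∀ t ∈ Ioc 0 t₀, |H t - t ^ 2| ≤ C * t ^ 3) :
    ∃ T ∈ Ioc 0 t₀, ∀ t ∈ Ioc 0 T,
      (H t)⁻¹ ∈ Icc ((t ^ 2)⁻¹ - 2 * C * t⁻¹) ((t ^ 2)⁻¹ + 2 * C * t⁻¹) := by
  refine ⟨min t₀ (1 / (2 * C)), ⟨lt_min ht₀ (by positivity), min_le_left _ _⟩,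
    fun t ht => inv_mem_Icc_of_abs_sub_le ht.1 ?_ (hH t ⟨ht.1, ht.2.trans (min_le_left _ _)⟩)⟩
  have := ht.2.trans (min_le_right _ _)
  rw [le_div_iff₀ (by positivity)] at this
  linarith

theorem eventually_mul_lt_of_hasDerivAt_neg_mul {φ q X : ℝ → ℝ} {T C a' : ℝ} (hT : 0 < T)
    (hφ : ∀ t ∈ Ioc 0 T, HasDerivAt φ (-(q t / 2) * X t) t) (hq : ∀ t ∈ Ioo 0 T, q t ≤ 1)
    (hX : ∀ t ∈ Ioo 0 T, 0 ≤ X t ∧ X t ≤ (t ^ 2)⁻¹ + 2 * C * t⁻¹) (ha' : 1 / 2 < a') :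
    ∀ᶠ t in 𝓝[>] 0, t * φ t < a' := by
  refine eventually_mul_lt_of_hasDerivAt_ge (c := -C) hT hφ (fun t ht => ?_) ha'
  nlinarith [mul_le_mul_of_nonneg_right (hq t ht) (hX t ht).1, (hX t ht).2]

theorem eventually_lt_mul_of_hasDerivAt_neg_mul {φ q X : ℝ → ℝ} {s C a' : ℝ} (hs : 0 < s)
    (hC : 0 ≤ C) (hφ : ∀ t ∈ Ioc 0 s, HasDerivAt φ (-(q t / 2) * X t) t)
    (hq : ∀ t ∈ Ioo 0 s, q s ≤ q t) (hqs : q s ∈ Icc 0 1)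
    (hX : ∀ t ∈ Ioo 0 s, 0 ≤ X t ∧ (t ^ 2)⁻¹ - 2 * C * t⁻¹ ≤ X t) (ha' : a' < q s / 2) :
    ∀ᶠ t in 𝓝[>] 0, a' < t * φ t := by
  refine eventually_lt_mul_of_hasDerivAt_le (c := C) hs hφ (fun t ht => ?_) ha'
  have hCt : 0 ≤ C * t⁻¹ := mul_nonneg hC (inv_nonneg.2 ht.1.le)
  nlinarith [mul_le_mul_of_nonneg_right (hq t ht) (hX t ht).1,
    mul_le_mul_of_nonneg_left (hX t ht).2 hqs.1, mul_le_mul_of_nonneg_right hqs.2 hCt]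

theorem t_phi_tendsto_half_general
    (h φ b : ℝ → ℝ) (t₀ : ℝ) (ht₀ : 0 < t₀)
    (hhasymp : ∃ C : ℝ, 0 < C ∧ ∀ t ∈ Ioc (0:ℝ) t₀, |h t ^ 2 - t ^ 2| ≤ C * t ^ 3)
    (hODE : ∀ t ∈ Ioc (0:ℝ) t₀,
      HasDerivAt φ ((b t ^ 2 - 1) / (2 * h t ^ 2)) t ∧
      HasDerivAt b (2 * b t * φ t) t)
    (hb : ∀ t ∈ Ioc (0:ℝ) t₀, b t ∈ Ioo (0:ℝ) 1)
    (hφ : ∀ t ∈ Ioc (0:ℝ) t₀, 0 < φ t) :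
    Tendsto (fun t => t * φ t) (nhdsWithin 0 (Ioi 0)) (nhds (1 / 2)) := by
  obtain ⟨C, hC, hCb⟩ := hhasymp
  obtain ⟨T, ⟨hT, hTt₀⟩, hX⟩ := exists_inv_mem_Icc_of_abs_sub_le ht₀ hC hCb
  have hsub : Ioc 0 T ⊆ Ioc 0 t₀ := Ioc_subset_Ioc_right hTt₀
  have hφ' : ∀ t ∈ Ioc 0 T, HasDerivAt φ (-((1 - b t ^ 2) / 2) * (h t ^ 2)⁻¹) t :=
    fun t ht => (hODE t (hsub ht)).1.congr_deriv (by ring)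
  have hq : ∀ t ∈ Ioc 0 t₀, 1 - b t ^ 2 ∈ Ioo 0 1 := fun t ht => by
    obtain ⟨hb0, hb1⟩ := hb t ht
    constructor <;> nlinarith
  have hq_anti : AntitoneOn (fun t => 1 - b t ^ 2) (Ioc 0 t₀) := by
    have hb_mono : MonotoneOn b (Ioc 0 t₀) :=
      monotoneOn_Ioc_of_hasDerivAt_nonneg (fun t ht => (hODE t ht).2) fun t ht => by
        have := (hb t (Ioo_subset_Ioc_self ht)).1
        have := hφ t (Ioo_subset_Ioc_self ht)
        positivity
    intro s hs t ht hst
    nlinarith [hb_mono hs ht hst, (hb s hs).1]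
  have hlower {s : ℝ} (hs : s ∈ Ioc 0 T) {a' : ℝ} (ha' : a' < (1 - b s ^ 2) / 2) :
      ∀ᶠ t in 𝓝[>] 0, a' < t * φ t := by
    have hsT : Ioc 0 s ⊆ Ioc 0 T := Ioc_subset_Ioc_right hs.2
    refine eventually_lt_mul_of_hasDerivAt_neg_mul hs.1 hC.le (fun t ht => hφ' t (hsT ht))
      (fun t ht => hq_anti (hsub (hsT (Ioo_subset_Ioc_self ht))) (hsub hs) ht.2.le)
      (Ioo_subset_Icc_self (hq s (hsub hs)))
      (fun t ht => ⟨by positivity, (hX t (hsT (Ioo_subset_Ioc_self ht))).1⟩) ha'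
  have hb0 : Tendsto b (𝓝[>] 0) (𝓝 0) := by
    have hqT := (hq T (hsub ⟨hT, le_rfl⟩)).1
    refine tendsto_zero_of_hasDerivAt_mul_ge (g := fun t => 2 * φ t) (c := (1 - b T ^ 2) / 2)
      ht₀ (by positivity) (fun t ht => (hb t ht).1)
      (fun t ht => (hODE t ht).2.congr_deriv (by ring)) ?_
    filter_upwards [hlower ⟨hT, le_rfl⟩ (a' := (1 - b T ^ 2) / 4) (by linarith)] with t ht
    linarith
  have hlim : Tendsto (fun s => (1 - b s ^ 2) / 2) (𝓝[>] 0) (𝓝 (1 / 2)) := by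
    simpa using ((hb0.pow 2).const_sub 1).div_const 2
  rw [tendsto_order]
  refine ⟨fun a' ha' => ?_, fun a' ha' => ?_⟩
  · obtain ⟨s, hs, hsT⟩ := ((hlim.eventually_const_lt ha').and (Ioc_mem_nhdsGT hT)).exists
    exact hlower hsT hs
  · exact eventually_mul_lt_of_hasDerivAt_neg_mul hT hφ'
      (fun t ht => (hq t (hsub (Ioo_subset_Ioc_self ht))).2.le)
      (fun t ht => ⟨by positivity, (hX t (Ioo_subset_Ioc_self ht)).2⟩) ha'

/-- For a solution of `φ' = (b² - 1)/(2h²)`, `b' = 2bφ` on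
`(0, t₀]` with `b ∈ (0,1)`, `φ > 0`, and `h(t)² = t² + O(t³)` near `0`, the
Higgs field has the precise Dirac-type asymptotic `lim_{t→0⁺} t·φ(t) = 1/2`. -/
theorem t_phi_tendsto_half
    (h φ b : ℝ → ℝ) (t₀ : ℝ) (ht₀ : 0 < t₀)
    (hhpos : ∀ t ∈ Ioi (0:ℝ), 0 < h t)
    (hhasymp : ∃ C : ℝ, 0 < C ∧ ∀ t ∈ Ioc (0:ℝ) t₀, |h t ^ 2 - t ^ 2| ≤ C * t ^ 3)
    (hODE : ∀ t ∈ Ioc (0:ℝ) t₀,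
      HasDerivAt φ ((b t ^ 2 - 1) / (2 * h t ^ 2)) t ∧
      HasDerivAt b (2 * b t * φ t) t)
    (hb : ∀ t ∈ Ioc (0:ℝ) t₀, b t ∈ Ioo (0:ℝ) 1)
    (hφ : ∀ t ∈ Ioc (0:ℝ) t₀, 0 < φ t) :
    Tendsto (fun t => t * φ t) (nhdsWithin 0 (Ioi 0)) (nhds (1 / 2)) :=
  t_phi_tendsto_half_general h φ b t₀ ht₀ hhasymp hODE hb hφ
end

section
/- Let (φ, b) solve φ' = (1 + b²)/(2h²), b' = 2bφ on (0, R] with b(R) ≠ 0, where h : (0,∞) → (0,∞) is continuous with h(t) = t + O(t³) as t → 0⁺. Then φ(r) ≤ φ(R) + c₁ - 1/(2r) for some constant c₁ > 0 and all r ∈ (0, R]. -/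
/-!
Since `b² ≥ 0`, `φ' ≥ 1/(2h²)`, and `h(t) ≤ t + Ct³` gives `1/(2h²) ≥ 1/(2t²) - C` near `0`.
So `φ(t) + 1/(2t) + Ct` is nondecreasing near `0`, while `φ` itself is nondecreasing on `(0, R]`.
-/

open Set

theorem monotoneOn_of_hasDerivAt_nonneg {D : Set ℝ} (hD : Convex ℝ D) {f f' : ℝ → ℝ}
    (hf : ∀ x ∈ D, HasDerivAt f (f' x) x) (hf'₀ : ∀ x ∈ D, 0 ≤ f' x) : MonotoneOn f D :=
  monotoneOn_of_hasDerivWithinAt_nonneg hD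
    (fun x hx => (hf x hx).continuousAt.continuousWithinAt)
    (fun x hx => (hf x (interior_subset hx)).hasDerivWithinAt)
    (fun x hx => hf'₀ x (interior_subset hx))

/-- With `u = Ct²`, this is `(1 - 2u)(1 + u)² = 1 - 3u² - 2u³ ≤ 1`. -/
theorem one_div_two_mul_sq_sub_le {t x C : ℝ} (ht : 0 < t) (hx : 0 < x) (hC : 0 ≤ C)
    (hxt : x ≤ t + C * t ^ 3) : 1 / (2 * t ^ 2) - C ≤ 1 / (2 * x ^ 2) := by
  have hsq : x ^ 2 ≤ (t + C * t ^ 3) ^ 2 := pow_le_pow_left₀ hx.le hxt 2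
  calc 1 / (2 * t ^ 2) - C ≤ 1 / (2 * (t + C * t ^ 3) ^ 2) := by
        rw [div_sub' (by positivity), div_le_div_iff₀ (by positivity) (by positivity)]
        nlinarith [pow_pos ht 4, pow_pos ht 6, mul_nonneg hC (pow_pos ht 6).le,
          mul_nonneg (pow_nonneg hC 2) (pow_pos ht 8).le,
          mul_nonneg (pow_nonneg hC 3) (pow_pos ht 10).le]
    _ ≤ 1 / (2 * x ^ 2) := by gcongr

theorem hasDerivAt_one_div_two_mul {t : ℝ} (ht : t ≠ 0) :
    HasDerivAt (fun s => 1 / (2 * s)) (-(1 / (2 * t ^ 2))) t := by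
  rw [show (fun s : ℝ => 1 / (2 * s)) = fun s => 1 / 2 * s⁻¹ from funext fun s => by ring]
  exact ((hasDerivAt_inv ht).const_mul (1 / 2)).congr_deriv (by ring)

theorem monotoneOn_add_one_div_two_mul_add_mul {φ φ' : ℝ → ℝ} {C m : ℝ}
    (hφ : ∀ t ∈ Ioc 0 m, HasDerivAt φ (φ' t) t)
    (hφ' : ∀ t ∈ Ioc 0 m, 1 / (2 * t ^ 2) - C ≤ φ' t) :
    MonotoneOn (fun t => φ t + 1 / (2 * t) + C * t) (Ioc 0 m) :=
  monotoneOn_of_hasDerivAt_nonneg (convex_Ioc 0 m)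
    (fun t ht => ((hφ t ht).add (hasDerivAt_one_div_two_mul ht.1.ne')).add
      ((hasDerivAt_id t).const_mul C))
    (fun t ht => by have := hφ' t ht; simp only [mul_one]; linarith)

theorem phi_upper_bound_P_alpha3_general
    (h φ b : ℝ → ℝ) (R : ℝ) (hR : 0 < R)
    (hhpos : ∀ t ∈ Ioi (0:ℝ), 0 < h t)
    (hhasymp : ∃ C t₁ : ℝ, 0 < C ∧ 0 < t₁ ∧
      ∀ t ∈ Ioc (0:ℝ) t₁, |h t - t| ≤ C * t ^ 3)
    (hODE : ∀ r ∈ Ioc (0:ℝ) R,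
      HasDerivAt φ ((1 + b r ^ 2) / (2 * h r ^ 2)) r ∧
      HasDerivAt b (2 * b r * φ r) r) :
    ∃ c₁ : ℝ, 0 < c₁ ∧ ∀ r ∈ Ioc (0:ℝ) R, φ r ≤ φ R + c₁ - 1 / (2 * r) := by
  obtain ⟨C, t₁, hC, ht₁, hasymp⟩ := hhasymp
  set m := min R t₁
  have hm : 0 < m := lt_min hR ht₁
  have hmR : m ≤ R := min_le_left R t₁
  have hφ_mono : MonotoneOn φ (Ioc 0 R) :=
    monotoneOn_of_hasDerivAt_nonneg (convex_Ioc 0 R) (fun t ht => (hODE t ht).1)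
      (fun t ht => by have := hhpos t ht.1; positivity)
  have hG_mono : MonotoneOn (fun t => φ t + 1 / (2 * t) + C * t) (Ioc 0 m) := by
    refine monotoneOn_add_one_div_two_mul_add_mul
      (fun t ht => (hODE t ⟨ht.1, ht.2.trans hmR⟩).1) fun t ht => ?_
    have hh := hhpos t ht.1
    calc 1 / (2 * t ^ 2) - C ≤ 1 / (2 * h t ^ 2) :=
          one_div_two_mul_sq_sub_le ht.1 hh hC.le
            (by linarith [le_abs_self (h t - t), hasymp t ⟨ht.1, ht.2.trans (min_le_right R t₁)⟩])
      _ ≤ (1 + b t ^ 2) / (2 * h t ^ 2) := by gcongr; nlinarith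
  refine ⟨1 / (2 * m) + C * m, by positivity, fun r hr => ?_⟩
  have hφmR : φ m ≤ φ R := hφ_mono ⟨hm, hmR⟩ ⟨hR, le_rfl⟩ hmR
  rcases le_or_gt r m with hrm | hmr
  · have := hG_mono ⟨hr.1, hrm⟩ ⟨hm, le_rfl⟩ hrm
    nlinarith [mul_pos hC hr.1]
  · have : 1 / (2 * r) ≤ 1 / (2 * m) := by gcongr
    linarith [hφ_mono hr ⟨hR, le_rfl⟩ hr.2, mul_pos hC hm]

/-- For a solution of `φ' = (1 + b²)/(2h²)`, `b' = 2bφ` on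
`(0, R]` with `b(R) ≠ 0` and `h(t) = t + O(t³)` near `0`, there is `c₁ > 0`
with `φ(r) ≤ φ(R) + c₁ - 1/(2r)` for all `r ∈ (0, R]`. -/
theorem phi_upper_bound_P_alpha3
    (h φ b : ℝ → ℝ) (R : ℝ) (hR : 0 < R)
    (hhpos : ∀ t ∈ Ioi (0:ℝ), 0 < h t)
    (hhasymp : ∃ C t₁ : ℝ, 0 < C ∧ 0 < t₁ ∧
      ∀ t ∈ Ioc (0:ℝ) t₁, |h t - t| ≤ C * t ^ 3)
    (hODE : ∀ r ∈ Ioc (0:ℝ) R,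
      HasDerivAt φ ((1 + b r ^ 2) / (2 * h r ^ 2)) r ∧
      HasDerivAt b (2 * b r * φ r) r)
    (hbR : b R ≠ 0) :
    ∃ c₁ : ℝ, 0 < c₁ ∧ ∀ r ∈ Ioc (0:ℝ) R, φ r ≤ φ R + c₁ - 1 / (2 * r) :=
  phi_upper_bound_P_alpha3_general h φ b R hR hhpos hhasymp hODE
end

section
/- Let (φ, b) solve φ' = (1 + b²)/(2h²), b' = 2bφ on (0, R] with b(R) ≠ 0 and h(t) = t + O(t³) near 0. Then for every δ smaller than the constant c₅ from the exponential lower bound b(r)² ≥ c·e^{c₅/r²}, one has lim_{r → 0⁺} |φ(r)|·e^{-δ/r²} = ∞. -/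
/-!
Near `0` we have `h ≤ 2r`, so `φ' ≥ c e^{c₅/r²} / (8r²)`. For `δ < δ' < c₅` the surplus factor
`e^{(c₅-δ')/r²} ≥ (c₅-δ')/r²` makes this at least `2δ'/r³ · e^{δ'/r²} = -(d/dr) e^{δ'/r²}`, so
`φ + e^{δ'/r²}` is increasing on some `(0, r₀]`. Hence `φ(r) ≤ M - e^{δ'/r²}`, and
`|φ(r)| e^{-δ/r²} ≥ e^{(δ'-δ)/r²} - |M| → ∞`.
-/

open Real Filter Set Topology

lemma eventually_pos_and_le_two_mul_of_abs_sub_le_cube {h : ℝ → ℝ} {C t₁ : ℝ} (ht₁ : 0 < t₁)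
    (hh : ∀ t ∈ Ioc 0 t₁, |h t - t| ≤ C * t ^ 3) :
    ∀ᶠ t in 𝓝[>] 0, 0 < h t ∧ h t ≤ 2 * t := by
  have hsmall : ∀ᶠ t in 𝓝[>] (0 : ℝ), C * t ^ 2 < 1 / 2 := by
    have : Tendsto (fun t : ℝ => C * t ^ 2) (𝓝 0) (𝓝 0) :=
      (by fun_prop : Continuous fun t : ℝ => C * t ^ 2).tendsto' 0 0 (by simp)
    exact (this.eventually (gt_mem_nhds one_half_pos)).filter_mono nhdsWithin_le_nhds
  filter_upwards [Ioc_mem_nhdsGT ht₁, hsmall] with t ht hCt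
  have hdev : |h t - t| ≤ t / 2 := calc
    |h t - t| ≤ C * t ^ 2 * t := by linarith [hh t ht]
    _ ≤ 1 / 2 * t := by gcongr; exact ht.1.le
    _ = t / 2 := by ring
  have := abs_le.1 hdev
  constructor <;> linarith [ht.1]

lemma tendsto_div_sq_nhdsGT_zero {a : ℝ} (ha : 0 < a) :
    Tendsto (fun r : ℝ => a / r ^ 2) (𝓝[>] 0) atTop := by
  have hsq : Tendsto (fun r : ℝ => r ^ 2) (𝓝[>] 0) (𝓝[>] 0) :=
    tendsto_nhdsWithin_of_tendsto_nhds_of_eventually_within _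
      (by simpa using ((continuous_pow 2).tendsto (0 : ℝ)).mono_left nhdsWithin_le_nhds)
      (by filter_upwards [self_mem_nhdsWithin] with r hr using pow_pos (mem_Ioi.1 hr) 2)
  simpa [div_eq_mul_inv] using (tendsto_inv_nhdsGT_zero.comp hsq).const_mul_atTop ha

lemma hasDerivAt_exp_div_sq (a : ℝ) {r : ℝ} (hr : r ≠ 0) :
    HasDerivAt (fun x => exp (a / x ^ 2)) (-(2 * a / r ^ 3) * exp (a / r ^ 2)) r := by
  have hinv : HasDerivAt (fun x : ℝ => a / x ^ 2) (-(2 * a / r ^ 3)) r := by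
    refine ((hasDerivAt_const r a).div (hasDerivAt_pow 2 r) (pow_ne_zero 2 hr)).congr_deriv ?_
    field_simp
    ring
  simpa [mul_comm] using hinv.exp

lemma two_mul_div_cube_mul_exp_le {a κ c r H B : ℝ} (hr : 0 < r) (hH : 0 < H) (hHr : H ≤ 2 * r)
    (hc : 0 ≤ c) (hB : c * exp (κ / r ^ 2) ≤ B) (hsmall : 16 * a * r ≤ c * (κ - a)) :
    2 * a / r ^ 3 * exp (a / r ^ 2) ≤ (1 + B) / (2 * H ^ 2) := by
  have hexp : (κ - a) / r ^ 2 ≤ exp ((κ - a) / r ^ 2) := by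
    linarith [add_one_le_exp ((κ - a) / r ^ 2)]
  calc 2 * a / r ^ 3 * exp (a / r ^ 2) = 16 * a * r * exp (a / r ^ 2) / (8 * r ^ 4) := by
        field_simp; ring
    _ ≤ c * (κ - a) * exp (a / r ^ 2) / (8 * r ^ 4) := by gcongr
    _ = c * ((κ - a) / r ^ 2) * exp (a / r ^ 2) / (8 * r ^ 2) := by field_simp
    _ ≤ c * exp ((κ - a) / r ^ 2) * exp (a / r ^ 2) / (8 * r ^ 2) := by gcongr
    _ = c * exp (κ / r ^ 2) / (8 * r ^ 2) := by
        rw [mul_assoc, ← exp_add]; congr 3; ring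
    _ ≤ B / (8 * r ^ 2) := by gcongr
    _ ≤ (1 + B) / (2 * H ^ 2) := by
        have : 0 ≤ c * exp (κ / r ^ 2) := by positivity
        apply div_le_div₀ (by linarith) (by linarith) (by positivity)
        nlinarith

lemma le_sub_exp_div_sq_of_hasDerivAt {f f' : ℝ → ℝ} {a r₀ : ℝ}
    (hf : ∀ r ∈ Ioc 0 r₀, HasDerivAt f (f' r) r)
    (hf' : ∀ r ∈ Ioc 0 r₀, 2 * a / r ^ 3 * exp (a / r ^ 2) ≤ f' r) :
    ∀ r ∈ Ioc 0 r₀, f r ≤ f r₀ + exp (a / r₀ ^ 2) - exp (a / r ^ 2) := by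
  set g' : ℝ → ℝ := fun r => f' r + -(2 * a / r ^ 3) * exp (a / r ^ 2)
  have hderiv : ∀ r ∈ Ioc 0 r₀, HasDerivAt (fun x => f x + exp (a / x ^ 2)) (g' r) r :=
    fun r hr => (hf r hr).add (hasDerivAt_exp_div_sq a hr.1.ne')
  have hmono : MonotoneOn (fun x => f x + exp (a / x ^ 2)) (Ioc 0 r₀) := by
    refine monotoneOn_of_hasDerivWithinAt_nonneg (f' := g') (convex_Ioc 0 r₀)
      (fun r hr => (hderiv r hr).continuousAt.continuousWithinAt) (fun r hr => ?_)
      (fun r hr => ?_)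
    all_goals rw [interior_Ioc] at hr
    · exact (hderiv r (Ioo_subset_Ioc_self hr)).hasDerivWithinAt
    · linarith [hf' r (Ioo_subset_Ioc_self hr)]
  intro r hr
  linarith [hmono hr ⟨hr.1.trans_le hr.2, le_rfl⟩ hr.2]

lemma tendsto_abs_mul_exp_neg_div_sq_of_le_sub_exp {f : ℝ → ℝ} {δ δ' M : ℝ} (hδ : δ < δ')
    (hδ₀ : 0 < δ) (hf : ∀ᶠ r in 𝓝[>] 0, f r ≤ M - exp (δ' / r ^ 2)) :
    Tendsto (fun r => |f r| * exp (-δ / r ^ 2)) (𝓝[>] 0) atTop := by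
  have hlim : Tendsto (fun r : ℝ => exp ((δ' - δ) / r ^ 2) + -|M|) (𝓝[>] 0) atTop :=
    tendsto_atTop_add_const_right _ _
      (tendsto_exp_atTop.comp (tendsto_div_sq_nhdsGT_zero (sub_pos.2 hδ)))
  refine tendsto_atTop_mono' _ ?_ hlim
  filter_upwards [hf] with r hr
  have hdecay : exp (-δ / r ^ 2) ≤ 1 :=
    exp_le_one_iff.2 (div_nonpos_of_nonpos_of_nonneg (by linarith) (sq_nonneg r))
  have hsplit : exp ((δ' - δ) / r ^ 2) = exp (δ' / r ^ 2) * exp (-δ / r ^ 2) := by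
    rw [← exp_add]; ring_nf
  have hM : M * exp (-δ / r ^ 2) ≤ |M| := calc
    M * exp (-δ / r ^ 2) ≤ |M| * exp (-δ / r ^ 2) := by gcongr; exact le_abs_self M
    _ ≤ |M| := mul_le_of_le_one_right (abs_nonneg M) hdecay
  calc exp ((δ' - δ) / r ^ 2) + -|M|
      ≤ (exp (δ' / r ^ 2) - M) * exp (-δ / r ^ 2) := by rw [hsplit]; linarith
    _ ≤ |f r| * exp (-δ / r ^ 2) := by
        gcongr; linarith [neg_le_abs (f r)]

theorem phi_diverges_faster_than_exp_general
    (h φ b : ℝ → ℝ) (R : ℝ) (hR : 0 < R)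
    (hhasymp : ∃ C t₁ : ℝ, 0 < C ∧ 0 < t₁ ∧
      ∀ t ∈ Ioc (0:ℝ) t₁, |h t - t| ≤ C * t ^ 3)
    (hODE : ∀ r ∈ Ioc (0:ℝ) R,
      HasDerivAt φ ((1 + b r ^ 2) / (2 * h r ^ 2)) r ∧
      HasDerivAt b (2 * b r * φ r) r)
    (c c₅ : ℝ) (hc : 0 < c)
    (hblow : ∀ r ∈ Ioc (0:ℝ) R, c * Real.exp (c₅ / r ^ 2) ≤ b r ^ 2) :
    ∀ δ : ℝ, 0 < δ → δ < c₅ →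
      Tendsto (fun r => |φ r| * Real.exp (-δ / r ^ 2))
        (nhdsWithin 0 (Ioi 0)) atTop := by
  intro δ hδ hδc₅
  obtain ⟨C, t₁, -, ht₁, hasymp⟩ := hhasymp
  obtain ⟨δ', hδδ', hδ'c₅⟩ := exists_between hδc₅
  have hsmall : ∀ᶠ r in 𝓝[>] (0 : ℝ), 16 * δ' * r < c * (c₅ - δ') := by
    have : Tendsto (fun r : ℝ => 16 * δ' * r) (𝓝 0) (𝓝 0) :=
      (by fun_prop : Continuous fun r : ℝ => 16 * δ' * r).tendsto' 0 0 (by simp)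
    exact (this.eventually (gt_mem_nhds (mul_pos hc (sub_pos.2 hδ'c₅)))).filter_mono
      nhdsWithin_le_nhds
  have hderiv : ∀ᶠ r in 𝓝[>] 0,
      r ∈ Ioc 0 R ∧ 2 * δ' / r ^ 3 * exp (δ' / r ^ 2) ≤ (1 + b r ^ 2) / (2 * h r ^ 2) := by
    filter_upwards [Ioc_mem_nhdsGT hR,
      eventually_pos_and_le_two_mul_of_abs_sub_le_cube ht₁ hasymp, hsmall]
      with r hr ⟨hpos, hle⟩ hr_small
    exact ⟨hr, two_mul_div_cube_mul_exp_le hr.1 hpos hle hc.le (hblow r hr) hr_small.le⟩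
  obtain ⟨r₀, hr₀, hsub⟩ := mem_nhdsGT_iff_exists_Ioc_subset.1 hderiv
  refine tendsto_abs_mul_exp_neg_div_sq_of_le_sub_exp
    (M := φ r₀ + exp (δ' / r₀ ^ 2)) hδδ' hδ ?_
  filter_upwards [Ioc_mem_nhdsGT hr₀] with r hr
  exact le_sub_exp_div_sq_of_hasDerivAt (fun r hr => (hODE r (hsub hr).1).1)
    (fun r hr => (hsub hr).2) r hr

/-- For a solution of `φ' = (1 + b²)/(2h²)`, `b' = 2bφ` on
`(0, R]` with `b(R) ≠ 0`, `h(t) = t + O(t³)` near `0`, and the exponential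
lower bound `b(r)² ≥ c·e^{c₅/r²}` near `0`, one has
`lim_{r→0⁺} |φ(r)|·e^{-δ/r²} = ∞` for every `0 < δ < c₅`. -/
theorem phi_diverges_faster_than_exp
    (h φ b : ℝ → ℝ) (R : ℝ) (hR : 0 < R)
    (hhpos : ∀ t ∈ Ioi (0:ℝ), 0 < h t)
    (hhasymp : ∃ C t₁ : ℝ, 0 < C ∧ 0 < t₁ ∧
      ∀ t ∈ Ioc (0:ℝ) t₁, |h t - t| ≤ C * t ^ 3)
    (hODE : ∀ r ∈ Ioc (0:ℝ) R,
      HasDerivAt φ ((1 + b r ^ 2) / (2 * h r ^ 2)) r ∧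
      HasDerivAt b (2 * b r * φ r) r)
    (hbR : b R ≠ 0)
    (c c₅ : ℝ) (hc : 0 < c) (hc₅ : 0 < c₅)
    (hblow : ∀ r ∈ Ioc (0:ℝ) R, c * Real.exp (c₅ / r ^ 2) ≤ b r ^ 2) :
    ∀ δ : ℝ, 0 < δ → δ < c₅ →
      Tendsto (fun r => |φ r| * Real.exp (-δ / r ^ 2))
        (nhdsWithin 0 (Ioi 0)) atTop :=
  phi_diverges_faster_than_exp_general h φ b R hR hhasymp hODE c c₅ hc hblow
end
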